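/- arXiv:2501.03924 — 2 statements merged into one kernel-verified Lean document; each statement's English description precedes it below -/
import Mathlib

section
/- Let G be the free group of rank N ≥ 2 and q := 2N − 1. Then lim_{n→∞} M_{1_Ω,1_Ω}(B_n)/n³ = (q−1)²/(3q(q+1)); i.e., M_{1_Ω,1_Ω}(B_n) is asymptotically equivalent to n³/K with K := 3q(q+1)/(q−1)². -/
open MeasureTheory Filter
open scoped ENNReal

noncomputable section

namespace FreeGroupBoundary

/-- The alphabet `A`: the `N` generators and their inverses. -/
abbrev Letter (N : ℕ) := Fin N × Bool

/-- The inverse of a letter. -/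
def invLetter {N : ℕ} (a : Letter N) : Letter N := (a.1, !a.2)

/-- An infinite word is reduced if no letter is followed by its inverse. -/
def IsReduced {N : ℕ} (ω : ℕ → Letter N) : Prop := ∀ i, ω (i + 1) ≠ invLetter (ω i)

/-- The boundary `Ω` of the free group: infinite reduced words,
topologized as a subspace of the product space `A^ℕ`. -/
def Boundary (N : ℕ) : Type := {ω : ℕ → Letter N // IsReduced ω}

instance {N : ℕ} : TopologicalSpace (Boundary N) := instTopologicalSpaceSubtype

/-- `Ω` carries the Borel σ-algebra. -/
instance {N : ℕ} : MeasurableSpace (Boundary N) := borel _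

/-- The word length `|g|` with respect to the standard generators. -/
def wordLength {N : ℕ} (g : FreeGroup (Fin N)) : ℕ := (FreeGroup.toWord g).length

/-- `prefixProd ω t = ω(0)ω(1)⋯ω(t-1) ∈ G`. -/
def prefixProd {N : ℕ} (ω : ℕ → Letter N) (t : ℕ) : FreeGroup (Fin N) :=
  FreeGroup.mk (List.ofFn fun i : Fin t => ω i)

/-- The shadow `Ω_x = {ω ∈ Ω | ω_{|x|} = x}`. -/
def shadow {N : ℕ} (x : FreeGroup (Fin N)) : Set (Boundary N) :=
  {ω | prefixProd ω.1 (wordLength x) = x}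

/-- The Busemann function `β_ω(e,g) = lim_t (|ω_t| - |g⁻¹ω_t|)`
(the sequence is eventually constant, so `limUnder` picks its limit). -/
def busemann {N : ℕ} (ω : ℕ → Letter N) (g : FreeGroup (Fin N)) : ℤ :=
  limUnder atTop fun t : ℕ =>
    (wordLength (prefixProd ω t) : ℤ) - (wordLength (g⁻¹ * prefixProd ω t) : ℤ)

/-- The action of `g` on infinite words: reduce the concatenation of the reduced
word of `g` with `ω`.  `c` is the number of cancellations at the junction. -/
def actSeq {N : ℕ} (g : FreeGroup (Fin N)) (ω : ℕ → Letter N) : ℕ → Letter N :=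
  let w := FreeGroup.toWord g
  let m := w.length
  let c := Nat.findGreatest
    (fun c => ∀ i < c, w.reverse[i]? = some (invLetter (ω i))) m
  fun i =>
    if h : i < m - c then w.get ⟨i, lt_of_lt_of_le h (Nat.sub_le m c)⟩
    else ω (i - (m - c) + c)

open scoped Classical in
/-- The action of `G` on its boundary `Ω` (the `else` branch never occurs:
the reduced concatenation of a reduced word and an infinite reduced word is reduced). -/
def act {N : ℕ} (g : FreeGroup (Fin N)) (ω : Boundary N) : Boundary N :=
  if h : IsReduced (actSeq g ω.1) then ⟨actSeq g ω.1, h⟩ else ω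

/-- The ball `B_n = {g ∈ G : |g| ≤ n}`. -/
def ball (N n : ℕ) : Set (FreeGroup (Fin N)) := {g | wordLength g ≤ n}

/-- The sphere `S_k = {g ∈ G : |g| = k}`. -/
def sphere (N k : ℕ) : Set (FreeGroup (Fin N)) := {g | wordLength g = k}

/-- The constant function `1_Ω` as an element of `ℋ = L²(Ω,ν)`. -/
def oneL {N : ℕ} (ν : Measure (Boundary N)) [IsFiniteMeasure ν] : Lp ℂ 2 ν :=
  (memLp_const (1 : ℂ)).toLp fun _ => (1 : ℂ)

/-- `M_{ψ₁,ψ₂}(L) = Σ_{g ∈ L} |⟨π(g)ψ₁, ψ₂⟩|²` (a finite sum, since the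
sets `L` used below are finite). -/
def Mcoef {N : ℕ} {ν : Measure (Boundary N)}
    (π : FreeGroup (Fin N) →* (Lp ℂ 2 ν →L[ℂ] Lp ℂ 2 ν))
    (ψ₁ ψ₂ : Lp ℂ 2 ν) (L : Set (FreeGroup (Fin N))) : ℝ :=
  ∑ᶠ g ∈ L, ‖(inner ℂ (π g ψ₁) ψ₂ : ℂ)‖ ^ 2


/-!
Writing `j` for the length of the common prefix of `ω` and the reduced word of `g`, one has
`β_ω(e, g) = 2 j - |g|`. Hence `q^{β_ω(e,g)/2}` is `q^{-|g|/2}` times the telescoping sum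
`1 + Σ_{i < |g|} (q^{i+1} - q^i) 1_{Ω_{g_{i+1}}}(ω)` over the shadows of the prefixes of `g`,
whose terms each integrate to `(q - 1)/(q + 1)`; so
`⟨π(g) 1_Ω, 1_Ω⟩ = q^{-|g|/2} (1 + |g| (q - 1)/(q + 1))`.

To evaluate `π(g) 1_Ω` one needs `1_Ω (g⁻¹ ω) = 1` for almost every `ω`, although `1_Ω` is only
a class of functions: the action has to be quasi-invariant. It changes the measure of a shadow
by a factor bounded in terms of `|g|` only; as every open set is a disjoint union of shadows and
`ν` is outer regular, null sets are preserved.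

Finally the sphere of radius `k ≥ 1` has `(q + 1) q^{k-1}` elements, so
`M(B_n) = 1 + Σ_{k < n} ((q - 1) k + 2 q)^2 / (q (q + 1))`, a cubic polynomial in `n` with
leading coefficient `(q - 1)^2 / (3 q (q + 1))`.
-/

open Topology

theorem _root_.FreeGroup.IsReduced.toWord_mk {α : Type*} [DecidableEq α] {L : List (α × Bool)}
    (h : FreeGroup.IsReduced L) : (FreeGroup.mk L).toWord = L := by
  rw [FreeGroup.toWord_mk, h.reduce_eq]

theorem _root_.FreeGroup.IsReduced.invRev {α : Type*} {L : List (α × Bool)}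
    (h : FreeGroup.IsReduced L) : FreeGroup.IsReduced (FreeGroup.invRev L) := by
  rw [FreeGroup.IsReduced, FreeGroup.invRev, List.isChain_reverse, List.isChain_map]
  exact h.imp fun a b hab e => by simpa using (hab e.symm).symm

theorem _root_.ENNReal.one_div_mul_pow_le {Q R : ℝ≥0∞} (hQ : 1 ≤ Q) (hQ' : Q ≠ ⊤) {a b s : ℕ}
    (h : a ≤ b + s) : 1 / (R * Q ^ b) ≤ Q ^ s * (1 / (R * Q ^ a)) := by
  have hQ0 : Q ≠ 0 := (zero_lt_one.trans_le hQ).ne'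
  calc 1 / (R * Q ^ b) = Q ^ s / (R * Q ^ (b + s)) := by
        rw [pow_add, ← mul_assoc]
        simpa using (ENNReal.mul_div_mul_right 1 (R * Q ^ b) (pow_ne_zero s hQ0)
          (ENNReal.pow_ne_top hQ')).symm
    _ ≤ Q ^ s / (R * Q ^ a) := ENNReal.div_le_div_left (by gcongr) _
    _ = Q ^ s * (1 / (R * Q ^ a)) := (mul_one_div _ _).symm

section CommonPrefix

variable {α : Type*}

lemma ofFn_add_eq_append (ω : ℕ → α) (j t : ℕ) :
    (List.ofFn fun i : Fin (j + t) => ω i) =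
      (List.ofFn fun i : Fin j => ω i) ++ List.ofFn fun i : Fin t => ω (j + i) := by
  simp [List.ofFn_add]

variable [DecidableEq α]

def commonPrefixLength (w : List α) (ω : ℕ → α) : ℕ :=
  Nat.findGreatest (fun i => (List.ofFn fun s : Fin i => ω s) <+: w) w.length

lemma ofFn_prefix_iff_le_commonPrefixLength {w : List α} {ω : ℕ → α} {i : ℕ} :
    (List.ofFn fun s : Fin i => ω s) <+: w ↔ i ≤ commonPrefixLength w ω := by
  refine ⟨fun h => Nat.le_findGreatest (by simpa using h.length_le) h, fun h => ?_⟩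
  obtain ⟨d, hd⟩ := Nat.exists_eq_add_of_le h
  have hmax : (List.ofFn fun s : Fin (commonPrefixLength w ω) => ω s) <+: w :=
    Nat.findGreatest_spec (P := fun i => (List.ofFn fun s : Fin i => ω s) <+: w)
      (Nat.zero_le _) (by simp)
  rw [hd, ofFn_add_eq_append] at hmax
  exact (List.prefix_append _ _).trans hmax

lemma ofFn_commonPrefixLength (w : List α) (ω : ℕ → α) :
    (List.ofFn fun s : Fin (commonPrefixLength w ω) => ω s) = w.take (commonPrefixLength w ω) := by
  simpa using List.prefix_iff_eq_take.mp (ofFn_prefix_iff_le_commonPrefixLength.mpr le_rfl)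

lemma commonPrefixLength_le (w : List α) (ω : ℕ → α) : commonPrefixLength w ω ≤ w.length :=
  Nat.findGreatest_le _

lemma getElem_commonPrefixLength_ne {w : List α} {ω : ℕ → α}
    (h : commonPrefixLength w ω < w.length) :
    w[commonPrefixLength w ω] ≠ ω (commonPrefixLength w ω) := by
  intro e
  have hsucc : (List.ofFn fun s : Fin (commonPrefixLength w ω + 1) => ω s) <+: w := by
    convert w.take_prefix (commonPrefixLength w ω + 1) using 1
    rw [ofFn_add_eq_append, List.take_add_one, ← ofFn_commonPrefixLength,
      List.getElem?_eq_getElem h, e]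
    simp
  have := ofFn_prefix_iff_le_commonPrefixLength.mp hsucc
  omega

end CommonPrefix

variable {N : ℕ}

section Words

@[simp] lemma invLetter_invLetter (a : Letter N) : invLetter (invLetter a) = a := by
  simp [invLetter]

lemma ne_invLetter_iff {a b : Letter N} : b ≠ invLetter a ↔ (a.1 = b.1 → a.2 = b.2) := by
  obtain ⟨a1, a2⟩ := a
  obtain ⟨b1, b2⟩ := b
  cases a2 <;> cases b2 <;> simp [invLetter, eq_comm]

lemma isReduced_append_singleton_iff {L : List (Letter N)} {a : Letter N} :
    FreeGroup.IsReduced (L ++ [a]) ↔ FreeGroup.IsReduced L ∧ ∀ b ∈ L.getLast?, a ≠ invLetter b := by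
  simp [FreeGroup.IsReduced, List.isChain_append, ne_invLetter_iff]

lemma getLast?_invRev_drop (w : List (Letter N)) (j : ℕ) :
    (FreeGroup.invRev (w.drop j)).getLast? = w[j]?.map invLetter := by
  simp [FreeGroup.invRev, List.getLast?_reverse, List.head?_drop]
  rfl

lemma wordLength_pos_iff {x : FreeGroup (Fin N)} : 0 < wordLength x ↔ x ≠ 1 :=
  Nat.pos_iff_ne_zero.trans FreeGroup.norm_eq_zero.not

lemma isReduced_ofFn {ω : ℕ → Letter N} (hω : IsReduced ω) (j t : ℕ) :
    FreeGroup.IsReduced (List.ofFn fun i : Fin t => ω (j + i)) :=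
  List.isChain_ofFn.mpr fun i _ => ne_invLetter_iff.mp (hω (j + i))

lemma toWord_prefixProd {ω : ℕ → Letter N} (hω : IsReduced ω) (t : ℕ) :
    (prefixProd ω t).toWord = List.ofFn fun i : Fin t => ω i := by
  rw [prefixProd]
  exact (by simpa using isReduced_ofFn hω 0 t : FreeGroup.IsReduced _).toWord_mk

lemma wordLength_prefixProd {ω : ℕ → Letter N} (hω : IsReduced ω) (t : ℕ) :
    wordLength (prefixProd ω t) = t := by
  simp [wordLength, toWord_prefixProd hω]

end Words

section Busemann

lemma wordLength_inv_mul_prefixProd (g : FreeGroup (Fin N)) {ω : ℕ → Letter N}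
    (hω : IsReduced ω) {t : ℕ} (ht : wordLength g ≤ t) :
    wordLength (g⁻¹ * prefixProd ω t) =
      wordLength g + t - 2 * commonPrefixLength g.toWord ω := by
  set j := commonPrefixLength g.toWord ω
  have hjg : j ≤ wordLength g := commonPrefixLength_le g.toWord ω
  set L := List.ofFn fun i : Fin (t - j) => ω (j + i)
  have hprod : g⁻¹ * prefixProd ω t = FreeGroup.mk (FreeGroup.invRev (g.toWord.drop j) ++ L) := by
    have hinv : g⁻¹ = (FreeGroup.mk (g.toWord.drop j))⁻¹ * (FreeGroup.mk (g.toWord.take j))⁻¹ := by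
      rw [← mul_inv_rev, FreeGroup.mul_mk, List.take_append_drop, FreeGroup.mk_toWord]
    rw [prefixProd, show t = j + (t - j) by omega, ofFn_add_eq_append, ofFn_commonPrefixLength,
      ← FreeGroup.mul_mk, ← FreeGroup.mul_mk, ← FreeGroup.inv_mk, hinv, mul_assoc,
      inv_mul_cancel_left]
  -- No cancellation at the junction: the letter after the common prefix differs from `ω j`.
  have hred : FreeGroup.IsReduced (FreeGroup.invRev (g.toWord.drop j) ++ L) := by
    refine List.isChain_append.mpr ⟨(FreeGroup.isReduced_toWord.infix
      (List.drop_suffix j _).isInfix).invRev, isReduced_ofFn hω j (t - j), ?_⟩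
    intro x hx y hy
    rw [getLast?_invRev_drop] at hx
    obtain ⟨a, ha, rfl⟩ := Option.map_eq_some_iff.mp hx
    obtain ⟨hjlt, rfl⟩ := List.getElem?_eq_some_iff.mp ha
    obtain rfl : y = ω j := by
      simp [L, List.head?_eq_getElem?] at hy
      exact hy.2.symm
    exact ne_invLetter_iff.mp (by simpa using (getElem_commonPrefixLength_ne hjlt).symm)
  rw [hprod, wordLength, hred.toWord_mk, List.length_append, FreeGroup.invRev_length,
    List.length_drop, List.length_ofFn]
  simp only [wordLength] at ht hjg ⊢
  omega

lemma busemann_eq (g : FreeGroup (Fin N)) {ω : ℕ → Letter N} (hω : IsReduced ω) :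
    busemann ω g = 2 * (commonPrefixLength g.toWord ω : ℤ) - wordLength g := by
  refine Tendsto.limUnder_eq (tendsto_const_nhds.congr' ?_)
  filter_upwards [eventually_ge_atTop (wordLength g)] with t ht
  have := commonPrefixLength_le g.toWord ω
  rw [wordLength_prefixProd hω, wordLength_inv_mul_prefixProd g hω ht]
  simp only [wordLength] at ht ⊢
  omega

end Busemann

section Shadows

def cylinder (M : List (Letter N)) : Set (Boundary N) :=
  {ω | ∀ t (h : t < M.length), ω.1 t = M[t]}

lemma mem_cylinder_iff_ofFn {M : List (Letter N)} {ω : Boundary N} :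
    ω ∈ cylinder M ↔ (List.ofFn fun s : Fin M.length => ω.1 s) = M := by
  simp [cylinder, List.ext_get_iff]

lemma isOpen_cylinder (M : List (Letter N)) : IsOpen (cylinder M) := by
  have : cylinder M = ⋂ t : Fin M.length, (fun ω : Boundary N => ω.1 t) ⁻¹' {M[t]} := by
    ext ω
    simp [cylinder, Fin.forall_iff]
  rw [this]
  exact isOpen_iInter_of_finite fun t =>
    (isOpen_discrete _).preimage ((continuous_apply _).comp continuous_subtype_val)

lemma shadow_eq_cylinder (x : FreeGroup (Fin N)) : shadow x = cylinder x.toWord := by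
  ext ω
  rw [mem_cylinder_iff_ofFn, shadow, Set.mem_ofPred_eq]
  constructor
  · intro h
    have := toWord_prefixProd ω.2 (wordLength x)
    rwa [h, eq_comm] at this
  · intro h
    rw [prefixProd, show wordLength x = x.toWord.length from rfl, h, FreeGroup.mk_toWord]

instance : BorelSpace (Boundary N) := ⟨rfl⟩

instance : TopologicalSpace.PseudoMetrizableSpace (Boundary N) :=
  Topology.IsInducing.subtypeVal.pseudoMetrizableSpace

lemma measurableSet_shadow (x : FreeGroup (Fin N)) : MeasurableSet (shadow x) :=
  shadow_eq_cylinder x ▸ (isOpen_cylinder _).measurableSet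

lemma cylinder_eq_shadow_mk {M : List (Letter N)} (h : FreeGroup.IsReduced M) :
    cylinder M = shadow (FreeGroup.mk M) := by
  rw [shadow_eq_cylinder, h.toWord_mk]

lemma cylinder_eq_empty {M : List (Letter N)} (h : ¬ FreeGroup.IsReduced M) :
    cylinder M = ∅ := by
  refine Set.eq_empty_of_forall_notMem fun ω hω => h ?_
  rw [← mem_cylinder_iff_ofFn.mp hω]
  simpa using isReduced_ofFn ω.2 0 M.length

lemma mem_shadow_mk_take_iff {g : FreeGroup (Fin N)} {ω : Boundary N} {i : ℕ}
    (hi : i ≤ wordLength g) :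
    ω ∈ shadow (FreeGroup.mk (g.toWord.take i)) ↔ i ≤ commonPrefixLength g.toWord ω.1 := by
  rw [← ofFn_prefix_iff_le_commonPrefixLength, List.prefix_iff_eq_take, shadow_eq_cylinder,
    (FreeGroup.isReduced_toWord.infix (List.take_prefix i _).isInfix).toWord_mk,
    mem_cylinder_iff_ofFn]
  simp [List.length_take_of_le hi]

lemma mem_shadow_prefixProd_iff {ω ω' : Boundary N} {t : ℕ} :
    ω' ∈ shadow (prefixProd ω.1 t) ↔ ∀ s < t, ω'.1 s = ω.1 s := by
  simp [shadow_eq_cylinder, toWord_prefixProd ω.2, cylinder]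

lemma mem_shadow_prefixProd_self (ω : Boundary N) (t : ℕ) : ω ∈ shadow (prefixProd ω.1 t) :=
  mem_shadow_prefixProd_iff.mpr fun _ _ => rfl

lemma prefixProd_eq_of_mem_shadow {ω : Boundary N} {x : FreeGroup (Fin N)} (h : ω ∈ shadow x) :
    prefixProd ω.1 (wordLength x) = x := h

lemma shadow_subset_shadow_of_mem {ω : Boundary N} {x y : FreeGroup (Fin N)}
    (hx : ω ∈ shadow x) (hy : ω ∈ shadow y) (hxy : wordLength x ≤ wordLength y) :
    shadow y ⊆ shadow x := by
  intro ω' hω'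
  rw [← prefixProd_eq_of_mem_shadow hy, mem_shadow_prefixProd_iff] at hω'
  rw [← prefixProd_eq_of_mem_shadow hx, mem_shadow_prefixProd_iff]
  exact fun s hs => hω' s (hs.trans_le hxy)

lemma exists_shadow_prefixProd_subset {U : Set (Boundary N)} (hU : IsOpen U) {ω : Boundary N}
    (hω : ω ∈ U) : ∃ t : ℕ, 0 < t ∧ shadow (prefixProd ω.1 t) ⊆ U := by
  obtain ⟨V, hV, rfl⟩ := isOpen_induced_iff.mp hU
  obtain ⟨I, u, hIu, hpi⟩ := isOpen_pi_iff.mp hV ω.1 hω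
  refine ⟨I.sup id + 1, Nat.succ_pos _, fun ω' hω' => hpi fun a ha => ?_⟩
  rw [mem_shadow_prefixProd_iff] at hω'
  rw [hω' a (Nat.lt_succ_of_le (Finset.le_sup (f := id) ha))]
  exact (hIu a ha).2

lemma exists_pairwiseDisjoint_shadow_eq_of_isOpen {U : Set (Boundary N)} (hU : IsOpen U) :
    ∃ D : Set (FreeGroup (Fin N)), (∀ x ∈ D, x ≠ 1) ∧ D.PairwiseDisjoint shadow ∧
      U = ⋃ x ∈ D, shadow x := by
  classical
  -- `D` consists of the maximal shadows contained in `U`.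
  let D := {x : FreeGroup (Fin N) | x ≠ 1 ∧ shadow x ⊆ U ∧
    ∀ y, y ≠ 1 → wordLength y < wordLength x → shadow x ⊆ shadow y → ¬ shadow y ⊆ U}
  refine ⟨D, fun x hx => hx.1, fun x hx y hy hxy => Set.disjoint_left.mpr fun ω hωx hωy => ?_,
    subset_antisymm (fun ω hω => ?_) (Set.iUnion₂_subset fun x hx => hx.2.1)⟩
  · rcases lt_trichotomy (wordLength x) (wordLength y) with h | h | h
    · exact hy.2.2 x hx.1 h (shadow_subset_shadow_of_mem hωx hωy h.le) hx.2.1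
    · exact hxy ((prefixProd_eq_of_mem_shadow hωx).symm.trans
        (h ▸ prefixProd_eq_of_mem_shadow hωy))
    · exact hx.2.2 y hy.1 h (shadow_subset_shadow_of_mem hωy hωx h.le) hy.2.1
  · have hex := exists_shadow_prefixProd_subset hU hω
    obtain ⟨ht, hsub⟩ := Nat.find_spec hex
    refine Set.mem_biUnion ⟨?_, hsub, fun y hy hlt hxy hyU => ?_⟩ (mem_shadow_prefixProd_self ω _)
    · rwa [← wordLength_pos_iff, wordLength_prefixProd ω.2]
    · rw [wordLength_prefixProd ω.2] at hlt
      have hωy := prefixProd_eq_of_mem_shadow (hxy (mem_shadow_prefixProd_self ω _))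
      exact Nat.find_min hex hlt ⟨wordLength_pos_iff.mpr hy, by rwa [hωy]⟩

end Shadows

section Action

lemma exists_actSeq_add_eq (h : FreeGroup (Fin N)) (ω : ℕ → Letter N) :
    ∃ c ≤ wordLength h, ∀ i, actSeq h ω (wordLength h + i) = ω (2 * c + i) := by
  have hc := Nat.findGreatest_le
    (P := fun c => ∀ i < c, h.toWord.reverse[i]? = some (invLetter (ω i))) h.toWord.length
  refine ⟨_, hc, fun i => ?_⟩
  simp only [actSeq]
  rw [dif_neg (by simp only [wordLength]; omega)]
  congr 1
  simp only [wordLength]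
  omega

lemma act_preimage_shadow_subset (h x : FreeGroup (Fin N)) :
    act h ⁻¹' shadow x ⊆ shadow x ∪
      ⋃ c ∈ Finset.range (wordLength h + 1), ⋃ v : Fin (2 * c) → Letter N,
        cylinder (List.ofFn v ++ x.toWord.drop (wordLength h)) := by
  intro ω hω
  by_cases hr : IsReduced (actSeq h ω.1)
  swap
  · rw [Set.mem_preimage, show act h ω = ω from dif_neg hr] at hω
    exact Or.inl hω
  right
  rw [Set.mem_preimage, show act h ω = ⟨_, hr⟩ from dif_pos hr, shadow_eq_cylinder] at hω
  obtain ⟨c, hc, hcω⟩ := exists_actSeq_add_eq h ω.1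
  refine Set.mem_biUnion (Finset.mem_range.mpr (Nat.lt_succ_of_le hc))
    (Set.mem_iUnion.mpr ⟨fun i => ω.1 i, fun t ht => ?_⟩)
  simp only [List.length_append, List.length_ofFn, List.length_drop] at ht
  by_cases htc : t < 2 * c
  · simp [List.getElem_append_left, htc]
  · have hx : actSeq h ω.1 (wordLength h + (t - 2 * c)) = _ :=
      hω (wordLength h + (t - 2 * c)) (by simp only [wordLength] at ht ⊢; omega)
    rw [hcω, show 2 * c + (t - 2 * c) = t by omega] at hx
    rw [hx, List.getElem_append_right (by simpa using htc), List.getElem_drop]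
    simp

end Action

def IsUniformBoundaryMeasure (q : ℕ) (ν : Measure (Boundary N)) : Prop :=
  ∀ x : FreeGroup (Fin N), x ≠ 1 →
    ν (shadow x) = 1 / (((q : ℝ≥0∞) + 1) * (q : ℝ≥0∞) ^ (wordLength x - 1))

section QuasiInvariance

variable {q : ℕ} {ν : Measure (Boundary N)}

lemma measure_cylinder_le (hν : IsUniformBoundaryMeasure q ν) {M : List (Letter N)}
    (hM : M ≠ []) :
    ν (cylinder M) ≤ 1 / (((q : ℝ≥0∞) + 1) * (q : ℝ≥0∞) ^ (M.length - 1)) := by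
  by_cases hred : FreeGroup.IsReduced M
  · rw [cylinder_eq_shadow_mk hred, hν _ ?_, wordLength, hred.toWord_mk]
    rwa [← wordLength_pos_iff, wordLength, hred.toWord_mk, List.length_pos_iff]
  · simp [cylinder_eq_empty hred]

lemma measure_preimage_act_shadow_le_of_lt (hq : 0 < q) (hν : IsUniformBoundaryMeasure q ν)
    (h : FreeGroup (Fin N)) {x : FreeGroup (Fin N)} (hx : wordLength h < wordLength x) :
    ν (act h ⁻¹' shadow x) ≤
      (1 + ∑ c ∈ Finset.range (wordLength h + 1), ∑ _v : Fin (2 * c) → Letter N,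
        (q : ℝ≥0∞) ^ wordLength h) * ν (shadow x) := by
  have hcyl : ∀ c (v : Fin (2 * c) → Letter N),
      ν (cylinder (List.ofFn v ++ x.toWord.drop (wordLength h))) ≤
        (q : ℝ≥0∞) ^ wordLength h * ν (shadow x) := by
    intro c v
    have hlen : (List.ofFn v ++ x.toWord.drop (wordLength h)).length =
        2 * c + (wordLength x - wordLength h) := by simp [wordLength]
    refine (measure_cylinder_le hν ?_).trans ?_
    · rw [← List.length_pos_iff, hlen]
      omega
    rw [hν x (wordLength_pos_iff.mp (by omega)), hlen]
    exact ENNReal.one_div_mul_pow_le (by exact_mod_cast hq) (ENNReal.natCast_ne_top q) (by omega)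
  calc ν (act h ⁻¹' shadow x)
      ≤ ν (shadow x) + ∑ c ∈ Finset.range (wordLength h + 1), ∑ v : Fin (2 * c) → Letter N,
          ν (cylinder (List.ofFn v ++ x.toWord.drop (wordLength h))) := by
        refine (measure_mono (act_preimage_shadow_subset h x)).trans
          ((measure_union_le _ _).trans (add_le_add le_rfl ?_))
        exact (measure_biUnion_finset_le _ _).trans
          (Finset.sum_le_sum fun c _ => measure_iUnion_fintype_le _ _)
    _ ≤ ν (shadow x) + ∑ c ∈ Finset.range (wordLength h + 1), ∑ _v : Fin (2 * c) → Letter N,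
          (q : ℝ≥0∞) ^ wordLength h * ν (shadow x) := by
        gcongr with c _ v
        exact hcyl c v
    _ = _ := by simp only [← Finset.sum_mul, add_mul, one_mul]

lemma measure_preimage_act_shadow_le_of_le [IsProbabilityMeasure ν] (hq : 0 < q)
    (hν : IsUniformBoundaryMeasure q ν) (h : FreeGroup (Fin N)) {x : FreeGroup (Fin N)}
    (hx : x ≠ 1) (hxh : wordLength x ≤ wordLength h) :
    ν (act h ⁻¹' shadow x) ≤ ((q + 1) * (q : ℝ≥0∞) ^ wordLength h) * ν (shadow x) := by
  have hq1 : (1 : ℝ≥0∞) ≤ q := by exact_mod_cast hq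
  calc ν (act h ⁻¹' shadow x) ≤ 1 := prob_le_one
    _ = ((q + 1) * (q : ℝ≥0∞) ^ (wordLength x - 1)) * ν (shadow x) := by
        rw [hν x hx, mul_one_div,
          ENNReal.div_self (by positivity) (by simp [ENNReal.mul_eq_top])]
    _ ≤ ((q + 1) * (q : ℝ≥0∞) ^ wordLength h) * ν (shadow x) := by
        gcongr
        omega

lemma exists_measure_preimage_act_shadow_le [IsProbabilityMeasure ν] (hq : 0 < q)
    (hν : IsUniformBoundaryMeasure q ν) (h : FreeGroup (Fin N)) :
    ∃ C : ℝ≥0∞, C ≠ ⊤ ∧ ∀ x, x ≠ 1 → ν (act h ⁻¹' shadow x) ≤ C * ν (shadow x) := by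
  refine ⟨(q + 1) * (q : ℝ≥0∞) ^ wordLength h + (1 + ∑ c ∈ Finset.range (wordLength h + 1),
    ∑ _v : Fin (2 * c) → Letter N, (q : ℝ≥0∞) ^ wordLength h),
    by simp [ENNReal.sum_eq_top, ENNReal.mul_eq_top], fun x hx => ?_⟩
  rcases le_or_gt (wordLength x) (wordLength h) with hxh | hxh
  · refine (measure_preimage_act_shadow_le_of_le hq hν h hx hxh).trans ?_
    gcongr ?_ * _
    exact le_self_add
  · refine (measure_preimage_act_shadow_le_of_lt hq hν h hxh).trans ?_
    gcongr ?_ * _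
    exact le_add_self

lemma exists_measure_preimage_act_le_of_isOpen [IsProbabilityMeasure ν] (hq : 0 < q)
    (hν : IsUniformBoundaryMeasure q ν) (h : FreeGroup (Fin N)) :
    ∃ C : ℝ≥0∞, C ≠ ⊤ ∧ ∀ U, IsOpen U → ν (act h ⁻¹' U) ≤ C * ν U := by
  obtain ⟨C, hC, hCx⟩ := exists_measure_preimage_act_shadow_le hq hν h
  refine ⟨C, hC, fun U hU => ?_⟩
  obtain ⟨D, hD1, hDdisj, rfl⟩ := exists_pairwiseDisjoint_shadow_eq_of_isOpen hU
  calc ν (act h ⁻¹' ⋃ x ∈ D, shadow x) ≤ ∑' x : D, ν (act h ⁻¹' shadow x) := by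
        rw [Set.preimage_iUnion₂]
        exact measure_biUnion_le _ D.to_countable _
    _ ≤ ∑' x : D, C * ν (shadow x) := ENNReal.tsum_le_tsum fun x => hCx x (hD1 x x.2)
    _ = C * ν (⋃ x ∈ D, shadow x) := by
        rw [ENNReal.tsum_mul_left,
          measure_biUnion D.to_countable hDdisj fun x _ => measurableSet_shadow x]

lemma measure_preimage_act_eq_zero [IsProbabilityMeasure ν] (hq : 0 < q)
    (hν : IsUniformBoundaryMeasure q ν) (h : FreeGroup (Fin N)) {E : Set (Boundary N)}
    (hE : ν E = 0) : ν (act h ⁻¹' E) = 0 := by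
  obtain ⟨C, hC, hCU⟩ := exists_measure_preimage_act_le_of_isOpen hq hν h
  have hle : ∀ ε > 0, ν (act h ⁻¹' E) ≤ C * ε := by
    intro ε hε
    obtain ⟨U, hEU, hU, hUε⟩ := Set.exists_isOpen_lt_of_lt E ε (hE ▸ hε)
    calc ν (act h ⁻¹' E) ≤ ν (act h ⁻¹' U) := measure_mono (Set.preimage_mono hEU)
      _ ≤ C * ν U := hCU U hU
      _ ≤ C * ε := by gcongr
  have hlim : Tendsto (fun ε => C * ε) (𝓝[>] 0) (𝓝 0) := by
    simpa using ENNReal.Tendsto.const_mul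
      (tendsto_nhdsWithin_of_tendsto_nhds (tendsto_id (x := 𝓝 (0 : ℝ≥0∞)))) (Or.inr hC)
  exact nonpos_iff_eq_zero.mp (ge_of_tendsto hlim (eventually_nhdsWithin_of_forall hle))

end QuasiInvariance

/-- Haagerup's spherical function, i.e. `⟨π(g) 1_Ω, 1_Ω⟩` for `|g| = k`. -/
def sphericalFunction (q k : ℕ) : ℝ :=
  (q : ℝ) ^ (-(k : ℝ) / 2) * (1 + k * ((q : ℝ) - 1) / ((q : ℝ) + 1))

section SphericalFunction

variable {q : ℕ} {ν : Measure (Boundary N)}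

lemma sphericalFunction_sq (hq : 0 < q) (k : ℕ) :
    sphericalFunction q k ^ 2 = (1 + k * ((q : ℝ) - 1) / ((q : ℝ) + 1)) ^ 2 / (q : ℝ) ^ k := by
  have hq0 : (0 : ℝ) < q := by exact_mod_cast hq
  rw [sphericalFunction, mul_pow, ← Real.rpow_natCast (_ ^ _), ← Real.rpow_mul hq0.le,
    show -(k : ℝ) / 2 * (2 : ℕ) = -k by push_cast; ring, Real.rpow_neg hq0.le, Real.rpow_natCast]
  ring

lemma rpow_busemann_eq (hq : 0 < q) (g : FreeGroup (Fin N)) (ω : Boundary N) :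
    (q : ℝ) ^ ((busemann ω.1 g : ℝ) / 2) = (q : ℝ) ^ (-(wordLength g : ℝ) / 2) *
      (1 + ∑ i ∈ Finset.range (wordLength g),
        (shadow (FreeGroup.mk (g.toWord.take (i + 1)))).indicator
          (fun _ => (q : ℝ) ^ (i + 1) - (q : ℝ) ^ i) ω) := by
  set j := commonPrefixLength g.toWord ω.1
  have hj : j ≤ wordLength g := commonPrefixLength_le _ _
  have hsum : ∑ i ∈ Finset.range (wordLength g),
      (shadow (FreeGroup.mk (g.toWord.take (i + 1)))).indicator
        (fun _ => (q : ℝ) ^ (i + 1) - (q : ℝ) ^ i) ω = (q : ℝ) ^ j - 1 := by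
    rw [← Finset.sum_range_add_sum_Ico _ hj, ← pow_zero (q : ℝ), ← Finset.sum_range_sub]
    refine (congrArg₂ (· + ·) ?_ ?_).trans (add_zero _)
    · refine Finset.sum_congr rfl fun i hi => Set.indicator_of_mem ?_ _
      rw [Finset.mem_range] at hi
      rw [mem_shadow_mk_take_iff (by omega)]
      omega
    · refine Finset.sum_eq_zero fun i hi => Set.indicator_of_notMem ?_ _
      rw [Finset.mem_Ico] at hi
      rw [mem_shadow_mk_take_iff (by omega)]
      omega
  have hq0 : (0 : ℝ) < q := by exact_mod_cast hq
  rw [hsum, add_sub_cancel, busemann_eq g ω.2, ← Real.rpow_natCast, ← Real.rpow_add hq0]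
  congr 1
  push_cast
  ring

lemma measureReal_shadow (hν : IsUniformBoundaryMeasure q ν) {x : FreeGroup (Fin N)}
    (hx : x ≠ 1) : ν.real (shadow x) = 1 / (((q : ℝ) + 1) * (q : ℝ) ^ (wordLength x - 1)) := by
  simpa [Measure.real, hν x hx] using Or.inl (ENNReal.toReal_natCast (q + 1))

lemma integral_indicator_shadow_mk_take (hq : 0 < q) (hν : IsUniformBoundaryMeasure q ν)
    {g : FreeGroup (Fin N)} {i : ℕ} (hi : i < wordLength g) :
    ∫ ω, (shadow (FreeGroup.mk (g.toWord.take (i + 1)))).indicator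
      (fun _ => (q : ℝ) ^ (i + 1) - (q : ℝ) ^ i) ω ∂ν = ((q : ℝ) - 1) / ((q : ℝ) + 1) := by
  have hq0 : (0 : ℝ) < q := by exact_mod_cast hq
  have hred := FreeGroup.isReduced_toWord.infix (List.take_prefix (i + 1) g.toWord).isInfix
  have hlen : wordLength (FreeGroup.mk (g.toWord.take (i + 1))) = i + 1 := by
    simp only [wordLength, hred.toWord_mk, List.length_take]
    simp only [wordLength] at hi
    omega
  rw [integral_indicator_const _ (measurableSet_shadow _),
    measureReal_shadow hν (wordLength_pos_iff.mp (by omega)), hlen, Nat.add_sub_cancel,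
    smul_eq_mul]
  field_simp
  ring

lemma integral_rpow_busemann [IsProbabilityMeasure ν] (hq : 0 < q)
    (hν : IsUniformBoundaryMeasure q ν) (g : FreeGroup (Fin N)) :
    ∫ ω, (q : ℝ) ^ ((busemann ω.1 g : ℝ) / 2) ∂ν = sphericalFunction q (wordLength g) := by
  have hint : ∀ i ∈ Finset.range (wordLength g), Integrable
      ((shadow (FreeGroup.mk (g.toWord.take (i + 1)))).indicator
        (fun _ => (q : ℝ) ^ (i + 1) - (q : ℝ) ^ i)) ν :=
    fun i _ => (integrable_const _).indicator (measurableSet_shadow _)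
  simp_rw [rpow_busemann_eq hq g]
  rw [integral_const_mul, integral_add (integrable_const 1) (integrable_finsetSum _ hint),
    integral_finsetSum _ hint, Finset.sum_congr rfl fun i hi =>
      integral_indicator_shadow_mk_take hq hν (Finset.mem_range.mp hi)]
  simp [sphericalFunction, mul_div_assoc]

lemma inner_oneL_eq_sphericalFunction [IsProbabilityMeasure ν] (hq : 0 < q)
    (hν : IsUniformBoundaryMeasure q ν) {g : FreeGroup (Fin N)} {φ : Lp ℂ 2 ν}
    (hφ : (φ : Boundary N → ℂ) =ᵐ[ν]
      fun ω => (((q : ℝ) ^ ((busemann ω.1 g : ℝ) / 2) : ℝ) : ℂ) * oneL ν (act g⁻¹ ω)) :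
    inner ℂ φ (oneL ν) = sphericalFunction q (wordLength g) := by
  have hone : (oneL ν : Boundary N → ℂ) =ᵐ[ν] fun _ => 1 := MemLp.coeFn_toLp _
  have hone_act : ∀ᵐ ω ∂ν, oneL ν (act g⁻¹ ω) = 1 :=
    measure_preimage_act_eq_zero hq hν g⁻¹ hone
  rw [L2.inner_def, ← integral_rpow_busemann hq hν g]
  refine (integral_congr_ae ?_).trans integral_ofReal
  filter_upwards [hφ, hone, hone_act] with ω h1 h2 h3
  rw [h1, h2, h3, mul_one, RCLike.inner_apply, Complex.conj_ofReal, one_mul]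
  rfl

end SphericalFunction

section Counting

variable (N) in
def reducedWords : ℕ → Finset (List (Letter N))
  | 0 => {[]}
  | k + 1 => (reducedWords k).biUnion fun L =>
      (Finset.univ.filter fun a : Letter N => ∀ b ∈ L.getLast?, a ≠ invLetter b).image (L ++ [·])

lemma mem_reducedWords {k : ℕ} {L : List (Letter N)} :
    L ∈ reducedWords N k ↔ L.length = k ∧ FreeGroup.IsReduced L := by
  induction k generalizing L with
  | zero =>
    simp only [reducedWords, Finset.mem_singleton, List.length_eq_zero_iff]
    exact ⟨fun h => ⟨h, h ▸ FreeGroup.IsReduced.nil⟩, And.left⟩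
  | succ k ih =>
    obtain rfl | ⟨M, a, rfl⟩ := L.eq_nil_or_concat'
    · simp [reducedWords]
    · simp [reducedWords, ih, isReduced_append_singleton_iff, and_assoc]

lemma card_filter_ne_invLetter {L : List (Letter N)} (hL : L ≠ []) :
    (Finset.univ.filter fun a : Letter N => ∀ b ∈ L.getLast?, a ≠ invLetter b).card =
      2 * N - 1 := by
  rw [List.getLast?_eq_some_getLast hL]
  simp [Finset.filter_ne', Finset.card_erase_of_mem, mul_comm]

lemma card_reducedWords_succ (k : ℕ) :
    (reducedWords N (k + 1)).card = 2 * N * (2 * N - 1) ^ k := by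
  have hcard : ∀ k, (reducedWords N (k + 1)).card = ∑ L ∈ reducedWords N k,
      (Finset.univ.filter fun a : Letter N => ∀ b ∈ L.getLast?, a ≠ invLetter b).card := by
    intro k
    rw [reducedWords, Finset.card_biUnion]
    · exact Finset.sum_congr rfl fun L _ =>
        Finset.card_image_of_injective _ fun a b h => by simpa using h
    · intro L _ L' _ hne
      simp only [Function.onFun, Finset.disjoint_left, Finset.mem_image]
      rintro _ ⟨a, _, rfl⟩ ⟨a', _, h⟩
      exact hne (List.append_inj_left' h rfl).symm
  induction k with
  | zero =>
    rw [hcard]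
    simp [reducedWords, mul_comm]
  | succ k ih =>
    rw [hcard, Finset.sum_congr rfl fun L hL => card_filter_ne_invLetter ?_, Finset.sum_const, ih,
      smul_eq_mul, pow_succ, mul_assoc]
    rintro rfl
    simp [mem_reducedWords] at hL

lemma wordLength_mk_of_mem_reducedWords {k : ℕ} {L : List (Letter N)}
    (hL : L ∈ reducedWords N k) : wordLength (FreeGroup.mk L) = k := by
  rw [wordLength, (mem_reducedWords.mp hL).2.toWord_mk, (mem_reducedWords.mp hL).1]

lemma ball_eq_image_reducedWords (n : ℕ) :
    ball N n = FreeGroup.mk '' ↑((Finset.range (n + 1)).biUnion (reducedWords N)) := by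
  ext g
  simp only [ball, Set.mem_ofPred_eq, Set.mem_image, Finset.coe_biUnion, Finset.coe_range,
    Set.mem_Iio, Set.mem_iUnion, Finset.mem_coe, exists_prop]
  constructor
  · exact fun hg => ⟨g.toWord, ⟨_, Nat.lt_succ_of_le hg,
      mem_reducedWords.mpr ⟨rfl, FreeGroup.isReduced_toWord⟩⟩, FreeGroup.mk_toWord⟩
  · rintro ⟨L, ⟨k, hk, hL⟩, rfl⟩
    rw [wordLength_mk_of_mem_reducedWords hL]
    omega

lemma finsum_mem_ball (F : ℕ → ℝ) (n : ℕ) :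
    ∑ᶠ g ∈ ball N n, F (wordLength g) =
      ∑ k ∈ Finset.range (n + 1), ((reducedWords N k).card : ℝ) * F k := by
  have hinj : Set.InjOn (FreeGroup.mk (α := Fin N))
      ((Finset.range (n + 1)).biUnion (reducedWords N) : Set (List (Letter N))) := by
    intro L hL L' hL' h
    simp only [Finset.coe_biUnion, Set.mem_iUnion, Finset.mem_coe] at hL hL'
    obtain ⟨_, _, hL⟩ := hL
    obtain ⟨_, _, hL'⟩ := hL'
    rw [← (mem_reducedWords.mp hL).2.toWord_mk, ← (mem_reducedWords.mp hL').2.toWord_mk, h]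
  rw [ball_eq_image_reducedWords, finsum_mem_image hinj, finsum_mem_coe_finset,
    Finset.sum_biUnion]
  · refine Finset.sum_congr rfl fun k _ => ?_
    rw [Finset.sum_congr rfl fun L hL => by rw [wordLength_mk_of_mem_reducedWords hL],
      Finset.sum_const, nsmul_eq_mul]
  · intro k _ k' _ hne
    exact Finset.disjoint_left.mpr fun L hL hL' =>
      hne ((mem_reducedWords.mp hL).1.symm.trans (mem_reducedWords.mp hL').1)

end Counting

lemma sum_range_sq_linear (a b : ℝ) (n : ℕ) :
    ∑ i ∈ Finset.range n, (a * i + b) ^ 2 =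
      a ^ 2 * ((n - 1) * n * (2 * n - 1) / 6) + a * b * (n * (n - 1)) + b ^ 2 * n := by
  induction n with
  | zero => simp
  | succ n ih =>
    rw [Finset.sum_range_succ, ih]
    push_cast
    ring

lemma tendsto_sum_range_sq_linear_div_cube (a b : ℝ) :
    Tendsto (fun n : ℕ => (∑ i ∈ Finset.range n, (a * i + b) ^ 2) / (n : ℝ) ^ 3) atTop
      (𝓝 (a ^ 2 / 3)) := by
  have h0 := tendsto_inv_atTop_nhds_zero_nat (𝕜 := ℝ)
  have hlim : Tendsto (fun n : ℕ => a ^ 2 / 3 + (a * b - a ^ 2 / 2) * (n : ℝ)⁻¹ +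
      (a ^ 2 / 6 - a * b + b ^ 2) * ((n : ℝ)⁻¹) ^ 2) atTop (𝓝 (a ^ 2 / 3)) := by
    simpa using (tendsto_const_nhds.add (h0.const_mul _)).add ((h0.pow 2).const_mul _)
  refine hlim.congr' ?_
  filter_upwards [eventually_ne_atTop 0] with n hn
  rw [sum_range_sq_linear]
  field_simp
  ring

lemma card_reducedWords_mul_sphericalFunction_sq {q : ℕ} (hq : q = 2 * N - 1) (hq0 : 0 < q)
    (k : ℕ) :
    ((reducedWords N (k + 1)).card : ℝ) * sphericalFunction q (k + 1) ^ 2 =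
      (((q : ℝ) - 1) * k + 2 * q) ^ 2 / (q * (q + 1)) := by
  have hqR : (0 : ℝ) < q := by exact_mod_cast hq0
  have hcard : ((reducedWords N (k + 1)).card : ℝ) = ((q : ℝ) + 1) * (q : ℝ) ^ k := by
    rw [card_reducedWords_succ, hq, show 2 * N = 2 * N - 1 + 1 by omega]
    push_cast
    ring
  rw [hcard, sphericalFunction_sq hq0]
  field_simp
  push_cast
  ring

lemma Mcoef_oneL_ball {q : ℕ} (hq : q = 2 * N - 1) (hq0 : 0 < q)
    {ν : Measure (Boundary N)} [IsProbabilityMeasure ν] (hν : IsUniformBoundaryMeasure q ν)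
    (π : FreeGroup (Fin N) →* (Lp ℂ 2 ν →L[ℂ] Lp ℂ 2 ν))
    (hπ : ∀ g : FreeGroup (Fin N), (π g (oneL ν) : Boundary N → ℂ) =ᵐ[ν]
      fun ω => (((q : ℝ) ^ ((busemann ω.1 g : ℝ) / 2) : ℝ) : ℂ) * oneL ν (act g⁻¹ ω))
    (n : ℕ) :
    Mcoef π (oneL ν) (oneL ν) (ball N n) =
      1 + (∑ k ∈ Finset.range n, (((q : ℝ) - 1) * k + 2 * q) ^ 2) / (q * (q + 1)) := by
  simp_rw [Mcoef, inner_oneL_eq_sphericalFunction hq0 hν (hπ _), Complex.norm_real,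
    Real.norm_eq_abs, sq_abs]
  rw [finsum_mem_ball (fun k => sphericalFunction q k ^ 2), Finset.sum_range_succ',
    Finset.sum_div, add_comm, Finset.sum_congr rfl fun k _ =>
      card_reducedWords_mul_sphericalFunction_sq hq hq0 k]
  simp [reducedWords, sphericalFunction]

theorem M_one_ball_asymptotic_general {N : ℕ} (hN : 2 ≤ N) {q : ℕ} (hq : q = 2 * N - 1)
    (ν : Measure (Boundary N)) [IsProbabilityMeasure ν]
    (hν : ∀ x : FreeGroup (Fin N), x ≠ 1 →
      ν (shadow x) = 1 / (((q : ℝ≥0∞) + 1) * (q : ℝ≥0∞) ^ (wordLength x - 1)))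
    (π : FreeGroup (Fin N) →* (Lp ℂ 2 ν →L[ℂ] Lp ℂ 2 ν))
    (hπ : ∀ (g : FreeGroup (Fin N)) (ψ : Lp ℂ 2 ν),
      (π g ψ : Boundary N → ℂ) =ᵐ[ν]
        fun ω => (((q : ℝ) ^ ((busemann ω.1 g : ℝ) / 2) : ℝ) : ℂ) * ψ (act g⁻¹ ω))
 :
    Tendsto (fun n : ℕ => Mcoef π (oneL ν) (oneL ν) (ball N n) / (n : ℝ) ^ 3)
      atTop (nhds (((q : ℝ) - 1) ^ 2 / (3 * (q : ℝ) * ((q : ℝ) + 1)))) := by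
  have hq0 : 0 < q := by omega
  have hlim := ((tendsto_inv_atTop_nhds_zero_nat (𝕜 := ℝ)).pow 3).add
    ((tendsto_sum_range_sq_linear_div_cube ((q : ℝ) - 1) (2 * q)).div_const ((q : ℝ) * (q + 1)))
  convert hlim using 2 with n
  · rw [Mcoef_oneL_ball hq hq0 hν π (fun g => hπ g _), add_div, inv_pow, one_div, div_right_comm]
  · field_simp
    ring

theorem M_one_ball_asymptotic {N : ℕ} (hN : 2 ≤ N) {q : ℕ} (hq : q = 2 * N - 1)
    (ν : Measure (Boundary N)) [IsProbabilityMeasure ν]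
    (hν : ∀ x : FreeGroup (Fin N), x ≠ 1 →
      ν (shadow x) = 1 / (((q : ℝ≥0∞) + 1) * (q : ℝ≥0∞) ^ (wordLength x - 1)))
    (π : FreeGroup (Fin N) →* (Lp ℂ 2 ν →L[ℂ] Lp ℂ 2 ν))
    (hπ_unitary : ∀ (g : FreeGroup (Fin N)) (ψ : Lp ℂ 2 ν), ‖π g ψ‖ = ‖ψ‖)
    (hπ : ∀ (g : FreeGroup (Fin N)) (ψ : Lp ℂ 2 ν),
      (π g ψ : Boundary N → ℂ) =ᵐ[ν]
        fun ω => (((q : ℝ) ^ ((busemann ω.1 g : ℝ) / 2) : ℝ) : ℂ) * ψ (act g⁻¹ ω))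
 :
    Tendsto (fun n : ℕ => Mcoef π (oneL ν) (oneL ν) (ball N n) / (n : ℝ) ^ 3)
      atTop (nhds (((q : ℝ) - 1) ^ 2 / (3 * (q : ℝ) * ((q : ℝ) + 1)))) :=
  M_one_ball_asymptotic_general hN hq ν hν π hπ

end FreeGroupBoundary
end
end

section
/- Let Γ be a group, σ a unitary representation of Γ on a complex Hilbert space H, (F_n) a sequence of finite subsets of Γ, and (a_n) a sequence of positive reals. Suppose that for all v₁, v₂, v₃, v₄ ∈ H, lim_{n→∞} (1/a_n)·Σ_{g ∈ F_n} ⟨σ(g)v₁, v₂⟩·conj(⟨σ(g)v₃, v₄⟩) = ⟨v₁, v₃⟩·conj(⟨v₂, v₄⟩). Then σ is irreducible: every closed σ-invariant subspace of H is {0} or H. -/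
open MeasureTheory Filter
open scoped ENNReal

noncomputable section

/-! If `V` were a nontrivial proper closed invariant subspace, pick `0 ≠ v ∈ V` and `0 ≠ w ∈ Vᗮ`.
Invariance makes every matrix coefficient `⟨σ(g)v, w⟩` vanish, so the averaged sums in the
asymptotic Schur relation for `(v, w, v, w)` are identically zero, while their limit
`‖v‖² ‖w‖²` is not. -/

open scoped ComplexConjugate InnerProductSpace

theorem Submodule.exists_ne_zero_mem_and_ne_zero_mem_orthogonal {𝕜 E : Type*} [RCLike 𝕜]
    [NormedAddCommGroup E] [InnerProductSpace 𝕜 E] [CompleteSpace E] {V : Submodule 𝕜 E}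
    (hV : IsClosed (V : Set E)) (hbot : V ≠ ⊥) (htop : V ≠ ⊤) :
    ∃ v ∈ V, v ≠ 0 ∧ ∃ w ∈ Vᗮ, w ≠ 0 := by
  have : CompleteSpace V := hV.completeSpace_coe
  obtain ⟨v, hvV, hv0⟩ := V.exists_mem_ne_zero_of_ne_bot hbot
  obtain ⟨w, hwV, hw0⟩ :=
    Vᗮ.exists_mem_ne_zero_of_ne_bot (mt Submodule.orthogonal_eq_bot_iff.mp htop)
  exact ⟨v, hvV, hv0, w, hwV, hw0⟩

theorem eq_zero_or_eq_zero_of_tendsto_sum_inner_mul_conj {ι H : Type*} [NormedAddCommGroup H]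
    [InnerProductSpace ℂ H] (T : ι → H → H) (F : ℕ → Finset ι) (c : ℕ → ℂ) {v w : H}
    (hvw : ∀ i, ⟪T i v, w⟫_ℂ = 0)
    (hlim : Tendsto (fun n => c n * ∑ i ∈ F n, ⟪T i v, w⟫_ℂ * conj ⟪T i v, w⟫_ℂ) atTop
      (nhds (⟪v, v⟫_ℂ * conj ⟪w, w⟫_ℂ))) :
    v = 0 ∨ w = 0 := by
  simp only [hvw, zero_mul, Finset.sum_const_zero, mul_zero] at hlim
  have hprod : ⟪v, v⟫_ℂ * conj ⟪w, w⟫_ℂ = 0 := tendsto_nhds_unique hlim tendsto_const_nhds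
  simpa only [mul_eq_zero, map_eq_zero, inner_self_eq_zero] using hprod

namespace FreeGroupBoundary

theorem irreducible_of_asymptotic_schur_general {Γ : Type*} [Group Γ]
    {H : Type*} [NormedAddCommGroup H] [InnerProductSpace ℂ H] [CompleteSpace H]
    (σ : Γ →* (H →L[ℂ] H))
    (F : ℕ → Finset Γ) (a : ℕ → ℝ)
    (hlim : ∀ v₁ v₂ v₃ v₄ : H,
      Tendsto
        (fun n : ℕ => (1 / (a n : ℂ)) *
          ∑ g ∈ F n, (inner ℂ (σ g v₁) v₂ : ℂ) * (starRingEnd ℂ) (inner ℂ (σ g v₃) v₄))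
        atTop (nhds ((inner ℂ v₁ v₃ : ℂ) * (starRingEnd ℂ) (inner ℂ v₂ v₄)))) :
    ∀ V : Submodule ℂ H, IsClosed (V : Set H) → (∀ (g : Γ), ∀ v ∈ V, σ g v ∈ V) →
      V = ⊥ ∨ V = ⊤ := by
  intro V hV hinv
  by_contra! hproper
  obtain ⟨v, hvV, hv0, w, hwV, hw0⟩ :=
    Submodule.exists_ne_zero_mem_and_ne_zero_mem_orthogonal hV hproper.1 hproper.2
  have hvw : ∀ g, ⟪σ g v, w⟫_ℂ = 0 := fun g =>
    Submodule.inner_right_of_mem_orthogonal (hinv g v hvV) hwV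
  exact (eq_zero_or_eq_zero_of_tendsto_sum_inner_mul_conj (fun g => σ g) F _ hvw
    (hlim v w v w)).elim hv0 hw0

theorem irreducible_of_asymptotic_schur {Γ : Type*} [Group Γ]
    {H : Type*} [NormedAddCommGroup H] [InnerProductSpace ℂ H] [CompleteSpace H]
    (σ : Γ →* (H →L[ℂ] H)) (hσ_unitary : ∀ (g : Γ) (v : H), ‖σ g v‖ = ‖v‖)
    (F : ℕ → Finset Γ) (a : ℕ → ℝ) (ha : ∀ n, 0 < a n)
    (hlim : ∀ v₁ v₂ v₃ v₄ : H,
      Tendsto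
        (fun n : ℕ => (1 / (a n : ℂ)) *
          ∑ g ∈ F n, (inner ℂ (σ g v₁) v₂ : ℂ) * (starRingEnd ℂ) (inner ℂ (σ g v₃) v₄))
        atTop (nhds ((inner ℂ v₁ v₃ : ℂ) * (starRingEnd ℂ) (inner ℂ v₂ v₄)))) :
    ∀ V : Submodule ℂ H, IsClosed (V : Set H) → (∀ (g : Γ), ∀ v ∈ V, σ g v ∈ V) →
      V = ⊥ ∨ V = ⊤ :=
  irreducible_of_asymptotic_schur_general σ F a hlim

end FreeGroupBoundary
end
end
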